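/- Let γ̂:𝔻[0,T]→D[0,T] be a pathwise-predictable map, i.e. v_u=ṽ_u for all u∈[0,t) implies γ̂(v)_t=γ̂(ṽ)_t. Define γ^{(N)}:C⁺[0,T]→D[0,T] by γ^{(N)}_t(S) = Σ_{k=1}^{n−1} γ̂_{τ̂_k}(F^{(N)}(S)) χ_{(τ_k,τ_{k+1}]}(t), with τ_k the 1/N-crossing times of S, n=H^{(N)}(S), and τ̂_k, F^{(N)}(S) the associated discretized jump times and piecewise constant approximation. Then γ^{(N)} is progressively measurable: if S_u=S̃_u for all u∈[0,t], then γ^{(N)}_t(S)=γ^{(N)}_t(S̃). -/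
import Mathlib


open MeasureTheory Set Filter

noncomputable section

namespace RobustHedging

/-- The sup norm of a path over the time interval `[0,T]`. -/
def supNormOn (T : ℝ) (v : ℝ → ℝ) : ℝ := ⨆ t : Icc (0:ℝ) T, |v t.1|

/-- `C⁺[0,T]`: continuous, strictly positive paths starting at `1`. -/
def CPlus (T : ℝ) : Set (ℝ → ℝ) :=
  {S | ContinuousOn S (Icc 0 T) ∧ (∀ t ∈ Icc (0:ℝ) T, 0 < S t) ∧ S 0 = 1}

/-- The pathwise integral `∫₀ᵗ γ_u dS_u`, defined as the limit of left-endpoint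
Riemann sums (which, for `γ` of bounded variation and `S` continuous, agrees with
the integration-by-parts Stieltjes definition `γ_t S_t - γ_0 S_0 - ∫₀ᵗ S dγ`). -/
def pathIntegral (γ S : ℝ → ℝ) (t : ℝ) : ℝ :=
  limUnder atTop fun n : ℕ =>
    ∑ i ∈ Finset.range n, γ (t * (i : ℝ) / (n : ℝ)) *
      (S (t * ((i : ℝ) + 1) / (n : ℝ)) - S (t * (i : ℝ) / (n : ℝ)))

/-- Pathwise progressive measurability: the value at time `t` depends only on the
path up to time `t`. -/
def ProgMeasurable' (T : ℝ) (γ : (ℝ → ℝ) → ℝ → ℝ) : Prop :=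
  ∀ v w : ℝ → ℝ, ∀ t ∈ Icc (0:ℝ) T, (∀ u ∈ Icc (0:ℝ) t, v u = w u) → γ v t = γ w t

/-- Pathwise predictability: the value at time `t` depends only on the path strictly
before time `t`. -/
def Predictable' (T : ℝ) (γ : (ℝ → ℝ) → ℝ → ℝ) : Prop :=
  ∀ v w : ℝ → ℝ, ∀ t ∈ Icc (0:ℝ) T, (∀ u, 0 ≤ u → u < t → v u = w u) → γ v t = γ w t

/-- A semi-static portfolio: a static position `g ∈ L¹(μ)` in vanilla options together
with a progressively measurable dynamic trading strategy `γ` of bounded variation. -/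
structure SemiStatic (T : ℝ) (μ : Measure ℝ) where
  g : ℝ → ℝ
  γ : (ℝ → ℝ) → ℝ → ℝ
  g_int : Integrable g μ
  prog : ProgMeasurable' T γ
  bv : ∀ S ∈ CPlus T, BoundedVariationOn (γ S) (Icc 0 T)

/-- The discounted portfolio value `Z^π_t(S) = g(S_T)χ_{t=T} + ∫₀ᵗ γ_u(S) dS_u`. -/
def value (T : ℝ) {μ : Measure ℝ} (π : SemiStatic T μ) (S : ℝ → ℝ) (t : ℝ) : ℝ :=
  (if t = T then π.g (S T) else 0) + pathIntegral (π.γ S) S t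

/-- `sup_{0 ≤ u ≤ t} S_u^p`. -/
def runningSupPow (p : ℝ) (S : ℝ → ℝ) (t : ℝ) : ℝ := ⨆ u : Icc (0:ℝ) t, S u.1 ^ p

/-- `sup_{0 ≤ u ≤ t} S_u`. -/
def runningMax (S : ℝ → ℝ) (t : ℝ) : ℝ := ⨆ u : Icc (0:ℝ) t, S u.1

/-- Admissibility: `Z^π_t(S) ≥ -M(1 + sup_{u ≤ t} S_u^p)`. -/
def Admissible (T p : ℝ) {μ : Measure ℝ} (π : SemiStatic T μ) : Prop :=
  ∃ M > (0:ℝ), ∀ S ∈ CPlus T, ∀ t ∈ Icc (0:ℝ) T,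
    -M * (1 + runningSupPow p S t) ≤ value T π S t

/-- Pathwise super-replication of the claim `G`. -/
def SuperReplicates (T : ℝ) {μ : Measure ℝ} (π : SemiStatic T μ) (G : (ℝ → ℝ) → ℝ) : Prop :=
  ∀ S ∈ CPlus T, G S ≤ value T π S T

/-- `V(G)`: the minimal robust super-hedging cost. -/
def V (T p : ℝ) (μ : Measure ℝ) (G : (ℝ → ℝ) → ℝ) : ℝ :=
  sInf {x | ∃ π : SemiStatic T μ, Admissible T p π ∧ SuperReplicates T π G ∧
    x = ∫ y, π.g y ∂μ}

/-- The `1/N`-crossing times `τ^{(N)}_k(S)` (capped at `T`). -/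
def crossTimes (T : ℝ) (N : ℕ) (S : ℝ → ℝ) : ℕ → ℝ
  | 0 => 0
  | k + 1 =>
    sInf ({t | crossTimes T N S k < t ∧ t ≤ T ∧
      |S t - S (crossTimes T N S k)| = 1 / (N : ℝ)} ∪ {T})

/-- `H^{(N)}(S)`: the first index `k` with `τ^{(N)}_k(S) = T`. -/
def hitIndex (T : ℝ) (N : ℕ) (S : ℝ → ℝ) : ℕ := sInf {k | crossTimes T N S k = T}

/-- Membership in the class `A_N`: the dynamic strategy is constant on each interval
`(τ^{(N)}_k(S), τ^{(N)}_{k+1}(S)]`. -/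
def TradesAtCrossings (T : ℝ) (N : ℕ) (γ : (ℝ → ℝ) → ℝ → ℝ) : Prop :=
  ∀ S ∈ CPlus T, ∀ k : ℕ,
    ∀ t₁ ∈ Ioc (crossTimes T N S k) (crossTimes T N S (k + 1)),
      ∀ t₂ ∈ Ioc (crossTimes T N S k) (crossTimes T N S (k + 1)), γ S t₁ = γ S t₂

/-- `V_N(G)`: the minimal super-hedging cost over portfolios in `A_N`. -/
def VN (T p : ℝ) (μ : Measure ℝ) (N : ℕ) (G : (ℝ → ℝ) → ℝ) : ℝ :=
  sInf {x | ∃ π : SemiStatic T μ, Admissible T p π ∧ TradesAtCrossings T N π.γ ∧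
    SuperReplicates T π G ∧ x = ∫ y, π.g y ∂μ}

/-- The piecewise constant path with values `v 1, …, v (n+1)` on the partition `t`. -/
def pcPath (T : ℝ) (n : ℕ) (v t : ℕ → ℝ) : ℝ → ℝ := fun s =>
  (∑ i ∈ Finset.range n, if t i ≤ s ∧ s < t (i + 1) then v (i + 1) else 0) +
    (if t n ≤ s ∧ s ≤ T then v (n + 1) else 0)

/-- A partition `0 = t_0 < t_1 < ⋯ < t_n ≤ T`. -/
def IsPartition (T : ℝ) (n : ℕ) (t : ℕ → ℝ) : Prop :=
  t 0 = 0 ∧ (∀ i < n, t i < t (i + 1)) ∧ t n ≤ T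

/-- Assumption 2.1 with constant `L`. -/
def SatisfiesAssumptionWith (T L : ℝ) (G : (ℝ → ℝ) → ℝ) : Prop :=
  (∀ v w : ℝ → ℝ, |G v - G w| ≤ L * supNormOn T fun s => v s - w s) ∧
  ∀ n : ℕ, ∀ v t t' : ℕ → ℝ, IsPartition T n t → IsPartition T n t' →
    |G (pcPath T n v t) - G (pcPath T n v t')| ≤
      L * supNormOn T (pcPath T n v t) *
        ∑ k ∈ Finset.range n, |(t (k + 1) - t k) - (t' (k + 1) - t' k)|

/-- Assumption 2.1 (for some constant `L > 0`). -/
def SatisfiesAssumption (T : ℝ) (G : (ℝ → ℝ) → ℝ) : Prop :=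
  ∃ L > (0:ℝ), SatisfiesAssumptionWith T L G

/-- The canonical filtration on path space generated by the coordinates up to time `t`. -/
def canFiltration (t : ℝ) : MeasurableSpace (ℝ → ℝ) :=
  ⨆ s ∈ Icc (0:ℝ) t, MeasurableSpace.comap (fun ω : ℝ → ℝ => ω s) inferInstance

/-- The canonical process is a martingale on `[0,T]` under `Q` (with integrable
coordinates). -/
def IsMartingaleOn (T : ℝ) (Q : Measure (ℝ → ℝ)) : Prop :=
  (∀ t ∈ Icc (0:ℝ) T, Integrable (fun ω : ℝ → ℝ => ω t) Q) ∧
  ∀ s t : ℝ, 0 ≤ s → s ≤ t → t ≤ T →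
    Q[(fun ω : ℝ → ℝ => ω t)|canFiltration s] =ᵐ[Q] fun ω => ω s

/-- `M_μ`: martingale measures on `C⁺[0,T]` starting at `1` with time-`T` marginal `μ`. -/
def MartMeasures (T : ℝ) (μ : Measure ℝ) : Set (Measure (ℝ → ℝ)) :=
  {Q | IsProbabilityMeasure Q ∧ Q (CPlus T) = 1 ∧ IsMartingaleOn T Q ∧
    Q.map (fun ω => ω T) = μ}

/-- The martingale optimal transport value `sup_{Q ∈ M_μ} E_Q[G(𝕊)]`. -/
def MOTValue (T : ℝ) (μ : Measure ℝ) (G : (ℝ → ℝ) → ℝ) : ℝ :=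
  sSup {x | ∃ Q ∈ MartMeasures T μ, x = ∫ ω, G ω ∂Q}

/-- The grids `U_k^{(N)}` of admissible inter-jump time increments. -/
def UkN (N k : ℕ) : Set ℝ :=
  {u | ∃ i : ℕ, 0 < i ∧ u = (i : ℝ) / ((2:ℝ) ^ k * (N : ℝ))} ∪
    {u | ∃ i : ℕ, 0 < i ∧ u = 1 / ((i : ℝ) * (2:ℝ) ^ k * (N : ℝ))}

/-- The discretized increment `Δτ̂_i = max{Δt ∈ U_i^{(N)} : Δt < Δτ_i}`. -/
def hatDelta (T : ℝ) (N : ℕ) (S : ℝ → ℝ) (i : ℕ) : ℝ :=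
  sSup {u ∈ UkN N i | u < crossTimes T N S i - crossTimes T N S (i - 1)}

/-- The discretized jump times `τ̂_k = Σ_{i ≤ k} Δτ̂_i` (with `τ̂_n = T`). -/
def hatTau (T : ℝ) (N : ℕ) (S : ℝ → ℝ) (k : ℕ) : ℝ :=
  if k = hitIndex T N S then T else ∑ i ∈ Finset.Icc 1 k, hatDelta T N S i

/-- The piecewise constant approximation `F^{(N)}(S)` of a path `S`. -/
def FN (T : ℝ) (N : ℕ) (S : ℝ → ℝ) : ℝ → ℝ := fun t =>
  let n := hitIndex T N S
  if n ≤ 1 then 1 + 1 / (N : ℝ) * Real.sign (S T - 1)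
  else
    (∑ k ∈ Finset.Ico 1 n,
      if hatTau T N S (k - 1) ≤ t ∧ t < hatTau T N S k then S (crossTimes T N S k) else 0) +
    if hatTau T N S (n - 1) ≤ t ∧ t ≤ T then
      S (crossTimes T N S (n - 1)) +
        1 / (N : ℝ) * Real.sign (S T - S (crossTimes T N S (n - 1)))
    else 0

/-- The countable set `D^{(N)}` of piecewise constant paths. -/
def DN (T : ℝ) (N : ℕ) : Set (ℝ → ℝ) :=
  {f | ∃ n : ℕ, ∃ t v : ℕ → ℝ,
    t 0 = 0 ∧ (∀ k < n, t k < t (k + 1)) ∧ t n < T ∧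
    (v 0 = 1 - 1 / (N : ℝ) ∨ v 0 = 1 + 1 / (N : ℝ)) ∧
    (∀ k < n, |v (k + 1) - v k| = 1 / (N : ℝ)) ∧
    (∀ k : ℕ, 1 ≤ k → k ≤ n → t k - t (k - 1) ∈ UkN N k) ∧
    (∀ s : ℝ, s ≤ 0 → f s = v 0) ∧
    (∀ k < n, ∀ s : ℝ, t k ≤ s → s < t (k + 1) → f s = v k) ∧
    (∀ s : ℝ, t n ≤ s → f s = v n)}

/-- The pathwise stochastic integral `∫_{[0,t]} γ_u df_u` of a process against a
pure-jump path `f`, as the sum of `γ` times the jumps of `f` up to time `t`. -/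
def jumpIntegral (γ f : ℝ → ℝ) (t : ℝ) : ℝ :=
  ∑' s : {s : ℝ // 0 < s ∧ s ≤ t ∧ f s ≠ Function.leftLim f s},
    γ s.1 * (f s.1 - Function.leftLim f s.1)

/-- The weights of the discretized measure `μ^{(N)}` on the grid `{k/N}`. -/
def muNweight (μ : Measure ℝ) (N : ℕ) : ℕ → ℝ
  | 0 => ∫ x in Icc (0:ℝ) (1 / (N : ℝ)), (1 - (N : ℝ) * x) ∂μ
  | k + 1 =>
      (∫ x in Ioc ((k : ℝ) / (N : ℝ)) (((k : ℝ) + 1) / (N : ℝ)), ((N : ℝ) * x - (k : ℝ)) ∂μ) +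
      (∫ x in Ioc (((k : ℝ) + 1) / (N : ℝ)) (((k : ℝ) + 2) / (N : ℝ)),
        ((k : ℝ) + 2 - (N : ℝ) * x) ∂μ)

/-- The integral `∫ h dμ^{(N)} = Σ_k μ^{(N)}({k/N}) h(k/N)`. -/
def muNint (μ : Measure ℝ) (N : ℕ) (h : ℝ → ℝ) : ℝ :=
  ∑' k : ℕ, muNweight μ N k * h ((k : ℝ) / (N : ℝ))

/-- The piecewise linear interpolation operator `L^{(N)}`. -/
def LN (N : ℕ) (h : ℝ → ℝ) : ℝ → ℝ := fun x =>
  (1 + (⌊(N : ℝ) * x⌋ : ℝ) - (N : ℝ) * x) * h ((⌊(N : ℝ) * x⌋ : ℝ) / (N : ℝ)) +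
    ((N : ℝ) * x - (⌊(N : ℝ) * x⌋ : ℝ)) * h ((1 + (⌊(N : ℝ) * x⌋ : ℝ)) / (N : ℝ))

/-- A `P̂^{(N)}`-admissible probabilistic semi-static super-hedge of `G`. -/
def PhatSuperHedge (T : ℝ) (Phat : Measure (ℝ → ℝ)) (G : (ℝ → ℝ) → ℝ)
    (h : ℝ → ℝ) (γ : (ℝ → ℝ) → ℝ → ℝ) : Prop :=
  (∃ C : ℝ, ∀ y, |h y| ≤ C) ∧ Predictable' T γ ∧
  (∃ M > (0:ℝ), ∀ᵐ ω ∂Phat, ∀ t ∈ Icc (0:ℝ) T, -M ≤ jumpIntegral (γ ω) ω t) ∧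
  ∀ᵐ ω ∂Phat, G ω ≤ h (ω T) + jumpIntegral (γ ω) ω T

/-- `V̂_N(G)`: the probabilistic super-hedging cost on the countable space. -/
def VhatN (T : ℝ) (μ : Measure ℝ) (N : ℕ) (Phat : Measure (ℝ → ℝ))
    (G : (ℝ → ℝ) → ℝ) : ℝ :=
  sInf {x | ∃ h : ℝ → ℝ, ∃ γ : (ℝ → ℝ) → ℝ → ℝ,
    PhatSuperHedge T Phat G h γ ∧ x = muNint μ N h}

/-- `M_N`: martingale measures supported on `D^{(N)}`. -/
def MN (T : ℝ) (N : ℕ) : Set (Measure (ℝ → ℝ)) :=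
  {Q | IsProbabilityMeasure Q ∧ Q (DN T N) = 1 ∧ IsMartingaleOn T Q}

/-- `M_N^{(K)}`: measures in `M_N` whose terminal marginal is within total distance
`K/N` of `μ^{(N)}`. -/
def MNK (T : ℝ) (N : ℕ) (μ : Measure ℝ) (K : ℝ) : Set (Measure (ℝ → ℝ)) :=
  {Q | Q ∈ MN T N ∧
    ∑' k : ℕ, |(Q {ω | ω T = (k : ℝ) / (N : ℝ)}).toReal - muNweight μ N k| < K / (N : ℝ)}

/-- A process is a local martingale on `[0,T]` under `Q`: there is a localizing
sequence of stopping times (for the canonical filtration) increasing to (at least) `T`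
such that each stopped process is a martingale. -/
def IsLocalMartingaleOn (T : ℝ) (Q : Measure (ℝ → ℝ)) (X : ℝ → (ℝ → ℝ) → ℝ) : Prop :=
  ∃ τ : ℕ → (ℝ → ℝ) → ℝ,
    (∀ n : ℕ, ∀ t ∈ Icc (0:ℝ) T, MeasurableSet[canFiltration t] {ω | τ n ω ≤ t}) ∧
    (∀ n ω, τ n ω ≤ τ (n + 1) ω) ∧
    (∀ᵐ ω ∂Q, ∃ n, T ≤ τ n ω) ∧
    ∀ n : ℕ,
      (∀ t ∈ Icc (0:ℝ) T, Integrable (fun ω => X (min t (τ n ω)) ω) Q) ∧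
      ∀ s t : ℝ, 0 ≤ s → s ≤ t → t ≤ T →
        Q[(fun ω => X (min t (τ n ω)) ω)|canFiltration s] =ᵐ[Q]
          fun ω => X (min s (τ n ω)) ω

/-- The claim `α_K(S) = ‖S‖ χ_{‖S‖ ≥ K} + ‖S‖/K`. -/
def alphaK (T K : ℝ) (S : ℝ → ℝ) : ℝ :=
  (if K ≤ supNormOn T S then supNormOn T S else 0) + supNormOn T S / K

/-- The strategy `γ^(N)` lifted from a predictable map `γ̂` on the countable space:
`γ^(N)_t(S) = Σ_(k=1)^(n-1) γ̂_(τ̂_k)(F^(N)(S)) χ_((τ_k, τ_(k+1)])(t)`. -/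
def liftedStrategy (T : ℝ) (N : ℕ) (γh : (ℝ → ℝ) → ℝ → ℝ) (S : ℝ → ℝ) (t : ℝ) : ℝ :=
  ∑ k ∈ Finset.Ico 1 (hitIndex T N S),
    if crossTimes T N S k < t ∧ t ≤ crossTimes T N S (k + 1) then
      γh (FN T N S) (hatTau T N S k)
    else 0

section Aux

variable {T : ℝ} {N : ℕ} {S S' : ℝ → ℝ} {t : ℝ}

/-- The set whose infimum defines the next crossing time. -/
def crossSet (T : ℝ) (N : ℕ) (S : ℝ → ℝ) (k : ℕ) : Set ℝ :=
  {s | crossTimes T N S k < s ∧ s ≤ T ∧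
      |S s - S (crossTimes T N S k)| = 1 / (N : ℝ)} ∪ {T}

lemma crossTimes_succ (k : ℕ) :
    crossTimes T N S (k + 1) = sInf (crossSet T N S k) := rfl

lemma crossTimes_zero : crossTimes T N S 0 = 0 := rfl

lemma crossSet_nonempty (k : ℕ) : (crossSet T N S k).Nonempty := ⟨T, Or.inr rfl⟩

lemma crossSet_bddBelow (k : ℕ) : BddBelow (crossSet T N S k) := by
  refine ⟨min (crossTimes T N S k) T, ?_⟩
  rintro x (⟨h1, _, _⟩ | rfl)
  · exact le_trans (min_le_left _ _) h1.le
  · exact min_le_right _ _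

lemma cross_step (hk0 : 0 ≤ crossTimes T N S k) (hkT : crossTimes T N S k ≤ T) :
    crossTimes T N S k ≤ crossTimes T N S (k + 1) ∧ crossTimes T N S (k + 1) ≤ T := by
  constructor
  · rw [crossTimes_succ]
    apply le_csInf (crossSet_nonempty k)
    rintro x (⟨h1, _, _⟩ | rfl)
    · exact h1.le
    · exact hkT
  · rw [crossTimes_succ]
    exact csInf_le (crossSet_bddBelow k) (Or.inr rfl)

lemma cross_bounds (hT : 0 ≤ T) :
    ∀ k, 0 ≤ crossTimes T N S k ∧ crossTimes T N S k ≤ T := by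
  intro k
  induction k with
  | zero => exact ⟨le_refl _, hT⟩
  | succ k ih =>
      obtain ⟨h1, h2⟩ := cross_step ih.1 ih.2
      exact ⟨ih.1.trans h1, h2⟩

lemma cross_mono (hT : 0 ≤ T) {k m : ℕ} (h : k ≤ m) :
    crossTimes T N S k ≤ crossTimes T N S m := by
  induction m with
  | zero => simp_all
  | succ m ih =>
      by_cases hkm : k = m + 1
      · exact hkm ▸ le_refl _
      · exact (ih (by omega)).trans
          (cross_step (cross_bounds hT m).1 (cross_bounds hT m).2).1

lemma exists_delta (hT : 0 ≤ T) (hN : 0 < N) (hS : S ∈ CPlus T) :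
    ∃ δ > (0:ℝ), ∀ k, crossTimes T N S k < T →
      min (crossTimes T N S k + δ) T ≤ crossTimes T N S (k + 1) := by
  have hc : UniformContinuousOn S (Icc 0 T) :=
    IsCompact.uniformContinuousOn_of_continuous isCompact_Icc hS.1
  rw [Metric.uniformContinuousOn_iff] at hc
  obtain ⟨δ, hδ, hδ'⟩ := hc (1 / (N : ℝ)) (by positivity)
  refine ⟨δ, hδ, ?_⟩
  intro k hk
  rw [crossTimes_succ]
  apply le_csInf (crossSet_nonempty k)
  rintro x (⟨h1, h2, h3⟩ | rfl)
  · refine le_trans (min_le_left _ _) ?_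
    by_contra h
    push_neg at h
    have hx : x ∈ Icc (0:ℝ) T := ⟨(cross_bounds hT k).1.trans h1.le, h2⟩
    have hτ : crossTimes T N S k ∈ Icc (0:ℝ) T := ⟨(cross_bounds hT k).1, hk.le⟩
    have hd := hδ' x hx _ hτ (by
      rw [Real.dist_eq, abs_of_pos (by linarith)]
      linarith)
    rw [Real.dist_eq, h3] at hd
    exact lt_irrefl _ hd
  · exact min_le_right _ _

lemma cross_strict (hT : 0 ≤ T) (hN : 0 < N) (hS : S ∈ CPlus T) {k : ℕ}
    (hk : crossTimes T N S k < T) :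
    crossTimes T N S k < crossTimes T N S (k + 1) := by
  obtain ⟨δ, hδ, hstep⟩ := exists_delta hT hN hS
  exact lt_of_lt_of_le (lt_min (by linarith) hk) (hstep k hk)

lemma cross_stay (hT : 0 ≤ T) {k : ℕ} (hk : crossTimes T N S k = T) :
    crossTimes T N S (k + 1) = T := by
  have h1 : 0 ≤ crossTimes T N S k := by rw [hk]; exact hT
  have h2 : crossTimes T N S k ≤ T := le_of_eq hk
  have h3 := cross_step (S := S) (N := N) h1 h2
  linarith [h3.1, h3.2, hk.le, hk.ge]

lemma exists_hit (hT : 0 ≤ T) (hN : 0 < N) (hS : S ∈ CPlus T) :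
    ∃ k, crossTimes T N S k = T := by
  obtain ⟨δ, hδ, hstep⟩ := exists_delta hT hN hS
  have claim : ∀ k, crossTimes T N S k = T ∨ (k : ℝ) * δ ≤ crossTimes T N S k := by
    intro k
    induction k with
    | zero => right; rw [crossTimes_zero]; simp
    | succ k ih =>
        rcases ih with h | h
        · exact Or.inl (cross_stay hT h)
        · rcases eq_or_lt_of_le (cross_bounds hT k).2 with he | hlt
          · exact Or.inl (cross_stay hT he)
          · have hm := hstep k hlt
            rcases le_or_gt T (crossTimes T N S k + δ) with h' | h'
            · left
              have hb := (cross_bounds (S := S) (N := N) hT (k+1)).2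
              have h1 : T ≤ crossTimes T N S (k + 1) :=
                le_trans (le_of_eq (min_eq_right h').symm) hm
              linarith
            · right
              rw [min_eq_left h'.le] at hm
              push_cast
              linarith
  obtain ⟨k, hk⟩ := exists_nat_gt (T / δ)
  refine ⟨k, ?_⟩
  rcases claim k with h | h
  · exact h
  · have := (cross_bounds (S := S) (N := N) hT k).2
    have : T < (k : ℝ) * δ := by
      rw [div_lt_iff₀ hδ] at hk; linarith
    linarith

lemma hit_spec (hT : 0 ≤ T) (hN : 0 < N) (hS : S ∈ CPlus T) :
    crossTimes T N S (hitIndex T N S) = T :=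
  Nat.sInf_mem (exists_hit hT hN hS)

lemma lt_hit (hT : 0 ≤ T) {k : ℕ} (hk : k < hitIndex T N S) :
    crossTimes T N S k < T :=
  lt_of_le_of_ne (cross_bounds hT k).2 (Nat.notMem_of_lt_sInf hk)

lemma hatDelta_bounds (hT : 0 ≤ T) (hN : 0 < N) (hS : S ∈ CPlus T) {i : ℕ}
    (hi : 1 ≤ i) (hiH : i ≤ hitIndex T N S) :
    0 < hatDelta T N S i ∧
      hatDelta T N S i ≤ crossTimes T N S i - crossTimes T N S (i - 1) := by
  set d := crossTimes T N S i - crossTimes T N S (i - 1) with hd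
  have hlt : crossTimes T N S (i - 1) < crossTimes T N S i := by
    have h1 : i - 1 < hitIndex T N S := by omega
    have h2 := cross_strict hT hN hS (lt_hit hT h1)
    have h3 : i - 1 + 1 = i := by omega
    rwa [h3] at h2
  have hdpos : 0 < d := by simp [hd]; linarith
  have hbdd : BddAbove {u ∈ UkN N i | u < d} := ⟨d, fun u hu => hu.2.le⟩
  have hc : (0:ℝ) < (2:ℝ) ^ i * (N : ℝ) := by positivity
  obtain ⟨m, hm⟩ := exists_nat_gt (1 / (d * ((2:ℝ) ^ i * (N : ℝ))))
  have hm0 : 0 < m := by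
    have hpos : 0 < 1 / (d * ((2:ℝ) ^ i * (N : ℝ))) := by positivity
    by_contra h
    push_neg at h
    have hz : m = 0 := by omega
    rw [hz] at hm
    simp only [Nat.cast_zero] at hm
    linarith
  have hmpos : (0:ℝ) < (m : ℝ) * (2:ℝ) ^ i * (N : ℝ) := by positivity
  set u := 1 / ((m : ℝ) * (2:ℝ) ^ i * (N : ℝ)) with hu
  have hupos : 0 < u := by positivity
  have humem : u ∈ {u ∈ UkN N i | u < d} := by
    refine ⟨Or.inr ⟨m, hm0, rfl⟩, ?_⟩
    rw [hu, div_lt_iff₀ hmpos]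
    rw [div_lt_iff₀ (by positivity)] at hm
    nlinarith
  constructor
  · exact lt_csSup_of_lt hbdd humem hupos
  · exact csSup_le ⟨u, humem⟩ (fun x hx => hx.2.le)

lemma hatTau_eq_sum {j : ℕ} (hj : j ≠ hitIndex T N S) :
    hatTau T N S j = ∑ i ∈ Finset.Icc 1 j, hatDelta T N S i := if_neg hj

lemma hatTau_bounds (hT : 0 ≤ T) (hN : 0 < N) (hS : S ∈ CPlus T) :
    ∀ {j : ℕ}, j < hitIndex T N S →
      0 ≤ hatTau T N S j ∧ hatTau T N S j ≤ crossTimes T N S j := by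
  intro j
  induction j with
  | zero =>
      intro hj
      rw [hatTau_eq_sum (by omega)]
      simp [crossTimes_zero]
  | succ j ih =>
      intro hj
      have hj' : j < hitIndex T N S := by omega
      obtain ⟨ih1, ih2⟩ := ih hj'
      obtain ⟨hd1, hd2⟩ := hatDelta_bounds hT hN hS (by omega)
        (show j + 1 ≤ hitIndex T N S by omega)
      have hd2' : hatDelta T N S (j + 1) ≤
          crossTimes T N S (j + 1) - crossTimes T N S j := by
        have he : j + 1 - 1 = j := by omega
        rwa [he] at hd2
      rw [hatTau_eq_sum (show j + 1 ≠ hitIndex T N S by omega),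
        Finset.sum_Icc_succ_top (show 1 ≤ j + 1 by omega)]
      rw [hatTau_eq_sum (show j ≠ hitIndex T N S by omega)] at ih1 ih2
      exact ⟨by linarith, by linarith⟩

lemma hatTau_mono (hT : 0 ≤ T) (hN : 0 < N) (hS : S ∈ CPlus T) {j m : ℕ}
    (hjm : j ≤ m) (hm : m < hitIndex T N S) :
    hatTau T N S j ≤ hatTau T N S m := by
  rw [hatTau_eq_sum (by omega), hatTau_eq_sum (by omega)]
  apply Finset.sum_le_sum_of_subset_of_nonneg
  · exact Finset.Icc_subset_Icc_right hjm
  · intro i hi _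
    rw [Finset.mem_Icc] at hi
    exact (hatDelta_bounds hT hN hS hi.1 (by omega)).1.le

lemma hatDelta_congr {i : ℕ}
    (h1 : crossTimes T N S (i - 1) = crossTimes T N S' (i - 1))
    (h2 : crossTimes T N S i = crossTimes T N S' i) :
    hatDelta T N S i = hatDelta T N S' i := by
  unfold hatDelta
  rw [h1, h2]

lemma hatTau_congr {j : ℕ} (hj : j < hitIndex T N S) (hj' : j < hitIndex T N S')
    (hcross : ∀ i ≤ j, crossTimes T N S i = crossTimes T N S' i) :
    hatTau T N S j = hatTau T N S' j := by
  rw [hatTau_eq_sum (by omega), hatTau_eq_sum (by omega)]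
  apply Finset.sum_congr rfl
  intro i hi
  rw [Finset.mem_Icc] at hi
  exact hatDelta_congr (hcross _ (by omega)) (hcross _ (by omega))

lemma sInf_congr_below {P Q : Set ℝ} (hP : P.Nonempty) (hQ : Q.Nonempty)
    (hPb : BddBelow P) (hQb : BddBelow Q)
    (h : ∀ s, s < t → (s ∈ P ↔ s ∈ Q)) (hlt : sInf P < t) : sInf P = sInf Q := by
  have hQt : sInf Q < t := by
    obtain ⟨p, hpP, hp⟩ := exists_lt_of_csInf_lt hP hlt
    exact lt_of_le_of_lt (csInf_le hQb ((h p hp).mp hpP)) hp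
  apply le_antisymm
  · apply le_of_forall_pos_le_add
    intro ε hε
    obtain ⟨q, hqQ, hq⟩ := exists_lt_of_csInf_lt hQ
      (lt_min hQt (lt_add_of_pos_right _ hε))
    exact le_trans (csInf_le hPb ((h q (lt_of_lt_of_le hq (min_le_left _ _))).mpr hqQ))
      (le_of_lt (lt_of_lt_of_le hq (min_le_right _ _)))
  · apply le_of_forall_pos_le_add
    intro ε hε
    obtain ⟨p, hpP, hp⟩ := exists_lt_of_csInf_lt hP
      (lt_min hlt (lt_add_of_pos_right _ hε))
    exact le_trans (csInf_le hQb ((h p (lt_of_lt_of_le hp (min_le_left _ _))).mp hpP))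
      (le_of_lt (lt_of_lt_of_le hp (min_le_right _ _)))

lemma cross_agree (hT : 0 ≤ T) (ht0 : 0 ≤ t) (htT : t ≤ T)
    (hag : ∀ u ∈ Icc (0:ℝ) t, S u = S' u) :
    ∀ k, (crossTimes T N S k < t ∨ crossTimes T N S' k < t) →
      crossTimes T N S k = crossTimes T N S' k := by
  intro k
  induction k with
  | zero => intro _; rfl
  | succ k ih =>
      intro hlt
      have hk : crossTimes T N S k < t ∨ crossTimes T N S' k < t := by
        rcases hlt with h | h
        · exact Or.inl (lt_of_le_of_lt (cross_step (cross_bounds hT k).1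
            (cross_bounds hT k).2).1 h)
        · exact Or.inr (lt_of_le_of_lt (cross_step (cross_bounds hT k).1
            (cross_bounds hT k).2).1 h)
      have hkk := ih hk
      have hkt : crossTimes T N S k < t := by
        rcases hk with h | h
        · exact h
        · rw [hkk]; exact h
      have hk0 : 0 ≤ crossTimes T N S k := (cross_bounds hT k).1
      have hPQ : ∀ s, s < t → (s ∈ crossSet T N S k ↔ s ∈ crossSet T N S' k) := by
        intro s hs
        have hmem : ∀ x y : ℝ, crossTimes T N S k < x → x < t →
            (|S x - S (crossTimes T N S k)| = 1 / (N:ℝ) ↔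
             |S' x - S' (crossTimes T N S' k)| = 1 / (N:ℝ)) := by
          intro x y h1 h2
          rw [hag x ⟨hk0.trans h1.le, h2.le⟩, hag _ ⟨hk0, hkt.le⟩, hkk]
        constructor
        · rintro (⟨h1, h2, h3⟩ | h)
          · exact Or.inl ⟨hkk ▸ h1, h2, (hmem s s h1 hs).mp h3⟩
          · rw [mem_singleton_iff] at h
            exact absurd (h ▸ hs) (not_lt.mpr htT)
        · rintro (⟨h1, h2, h3⟩ | h)
          · exact Or.inl ⟨hkk ▸ h1, h2, (hmem s s (hkk ▸ h1) hs).mpr h3⟩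
          · rw [mem_singleton_iff] at h
            exact absurd (h ▸ hs) (not_lt.mpr htT)
      rw [crossTimes_succ, crossTimes_succ]
      rcases hlt with h | h
      · exact sInf_congr_below (crossSet_nonempty k) (crossSet_nonempty k)
          (crossSet_bddBelow k) (crossSet_bddBelow k) hPQ h
      · exact (sInf_congr_below (crossSet_nonempty k) (crossSet_nonempty k)
          (crossSet_bddBelow k) (crossSet_bddBelow k)
          (fun s hs => (hPQ s hs).symm) h).symm

end Aux

section Main

variable {T : ℝ} {N : ℕ} {S S' : ℝ → ℝ} {t : ℝ}

lemma FN_eq (hn : ¬ hitIndex T N S ≤ 1) (u : ℝ) :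
    FN T N S u =
      (∑ k ∈ Finset.Ico 1 (hitIndex T N S),
        if hatTau T N S (k - 1) ≤ u ∧ u < hatTau T N S k then
          S (crossTimes T N S k) else 0) +
      (if hatTau T N S (hitIndex T N S - 1) ≤ u ∧ u ≤ T then
        S (crossTimes T N S (hitIndex T N S - 1)) +
          1 / (N : ℝ) * Real.sign (S T - S (crossTimes T N S (hitIndex T N S - 1)))
      else 0) := by
  simp only [FN]
  rw [if_neg hn]

lemma FN_agree (hT : 0 ≤ T) (hN : 0 < N) (hS : S ∈ CPlus T) (hS' : S' ∈ CPlus T)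
    (ht0 : 0 ≤ t) (htT : t ≤ T) (hag : ∀ u ∈ Icc (0:ℝ) t, S u = S' u)
    {k : ℕ} (hk1 : 1 ≤ k) (hkn : k < hitIndex T N S) (hkn' : k < hitIndex T N S')
    (hkt : crossTimes T N S k < t)
    {u : ℝ} (hu : u < hatTau T N S k) :
    FN T N S u = FN T N S' u := by
  have crossEq : ∀ i ≤ k, crossTimes T N S i = crossTimes T N S' i := fun i hi =>
    cross_agree hT ht0 htT hag i (Or.inl (lt_of_le_of_lt (cross_mono hT hi) hkt))
  have hn2 : ¬ hitIndex T N S ≤ 1 := by omega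
  have hn2' : ¬ hitIndex T N S' ≤ 1 := by omega
  rw [FN_eq hn2 u, FN_eq hn2' u]
  have hatEq : ∀ j ≤ k, hatTau T N S j = hatTau T N S' j := fun j hj =>
    hatTau_congr (by omega) (by omega) (fun i hi => crossEq i (le_trans hi hj))
  have hlast : ¬ (hatTau T N S (hitIndex T N S - 1) ≤ u ∧ u ≤ T) := by
    rintro ⟨h1, -⟩
    have h2 : hatTau T N S k ≤ hatTau T N S (hitIndex T N S - 1) :=
      hatTau_mono hT hN hS (by omega) (by omega)
    linarith
  have hlast' : ¬ (hatTau T N S' (hitIndex T N S' - 1) ≤ u ∧ u ≤ T) := by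
    rintro ⟨h1, -⟩
    have h2 : hatTau T N S' k ≤ hatTau T N S' (hitIndex T N S' - 1) :=
      hatTau_mono hT hN hS' (by omega) (by omega)
    have h3 := hatEq k le_rfl
    linarith
  rw [if_neg hlast, if_neg hlast', add_zero, add_zero]
  have hzero : ∀ j ∈ Finset.Ico 1 (hitIndex T N S), j ∉ Finset.Ico 1 (k + 1) →
      (if hatTau T N S (j - 1) ≤ u ∧ u < hatTau T N S j then
        S (crossTimes T N S j) else 0) = 0 := by
    intro j hj hj'
    rw [Finset.mem_Ico] at hj hj'
    rw [if_neg]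
    rintro ⟨h1, -⟩
    have h2 : hatTau T N S k ≤ hatTau T N S (j - 1) :=
      hatTau_mono hT hN hS (by omega) (by omega)
    linarith
  have hzero' : ∀ j ∈ Finset.Ico 1 (hitIndex T N S'), j ∉ Finset.Ico 1 (k + 1) →
      (if hatTau T N S' (j - 1) ≤ u ∧ u < hatTau T N S' j then
        S' (crossTimes T N S' j) else 0) = 0 := by
    intro j hj hj'
    rw [Finset.mem_Ico] at hj hj'
    rw [if_neg]
    rintro ⟨h1, -⟩
    have h2 : hatTau T N S' k ≤ hatTau T N S' (j - 1) :=
      hatTau_mono hT hN hS' (by omega) (by omega)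
    have h3 := hatEq k le_rfl
    linarith
  rw [← Finset.sum_subset
      (Finset.Ico_subset_Ico_right (show k + 1 ≤ hitIndex T N S by omega)) hzero,
    ← Finset.sum_subset
      (Finset.Ico_subset_Ico_right (show k + 1 ≤ hitIndex T N S' by omega)) hzero']
  apply Finset.sum_congr rfl
  intro j hj
  rw [Finset.mem_Ico] at hj
  have e1 : hatTau T N S (j - 1) = hatTau T N S' (j - 1) := hatEq _ (by omega)
  have e2 : hatTau T N S j = hatTau T N S' j := hatEq _ (by omega)
  have e3 : crossTimes T N S j = crossTimes T N S' j := crossEq _ (by omega)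
  have e4 : S (crossTimes T N S j) = S' (crossTimes T N S' j) := by
    rw [← e3]
    apply hag
    exact ⟨(cross_bounds hT j).1,
      le_of_lt (lt_of_le_of_lt (cross_mono hT (by omega)) hkt)⟩
  rw [e1, e2, e4]

lemma ind_imp (hT : 0 ≤ T) (ht0 : 0 ≤ t) (htT : t ≤ T)
    (hag : ∀ u ∈ Icc (0:ℝ) t, S u = S' u) {k : ℕ}
    (h : crossTimes T N S k < t ∧ t ≤ crossTimes T N S (k + 1)) :
    crossTimes T N S' k < t ∧ t ≤ crossTimes T N S' (k + 1) := by
  obtain ⟨h1, h2⟩ := h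
  have ek := cross_agree hT ht0 htT hag k (Or.inl h1)
  refine ⟨ek ▸ h1, ?_⟩
  by_contra hcon
  push_neg at hcon
  have e := cross_agree hT ht0 htT hag (k + 1) (Or.inr hcon)
  rw [e] at h2
  linarith

end Main

/-- Lemma 5.4: the lifted strategy is progressively measurable. -/
theorem lifted_progressive (T : ℝ) (hT : 0 < T) (N : ℕ) (hN : 0 < N)
    (γh : (ℝ → ℝ) → ℝ → ℝ) (hpred : Predictable' T γh) :
    ∀ S ∈ CPlus T, ∀ S' ∈ CPlus T, ∀ t ∈ Icc (0:ℝ) T,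
      (∀ u ∈ Icc (0:ℝ) t, S u = S' u) →
      liftedStrategy T N γh S t = liftedStrategy T N γh S' t := by
  intro S hS S' hS' t ht hag
  obtain ⟨ht0, htT⟩ := ht
  have hT0 : (0:ℝ) ≤ T := hT.le
  have hag' : ∀ u ∈ Icc (0:ℝ) t, S' u = S u := fun u hu => (hag u hu).symm
  have hhit' : crossTimes T N S' (hitIndex T N S') = T := hit_spec hT0 hN hS'
  have hhit : crossTimes T N S (hitIndex T N S) = T := hit_spec hT0 hN hS
  unfold liftedStrategy
  set n := hitIndex T N S with hn
  set n' := hitIndex T N S' with hn'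
  have hfzero : ∀ k, n' ≤ k →
      (if crossTimes T N S k < t ∧ t ≤ crossTimes T N S (k + 1) then
        γh (FN T N S) (hatTau T N S k) else 0) = 0 := by
    intro k hk
    rw [if_neg]
    rintro ⟨h1, -⟩
    have h3 : crossTimes T N S n' < t := lt_of_le_of_lt (cross_mono hT0 hk) h1
    have e := cross_agree hT0 ht0 htT hag n' (Or.inl h3)
    rw [e, hhit'] at h3
    linarith
  have hfzero' : ∀ k, n ≤ k →
      (if crossTimes T N S' k < t ∧ t ≤ crossTimes T N S' (k + 1) then
        γh (FN T N S') (hatTau T N S' k) else 0) = 0 := by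
    intro k hk
    rw [if_neg]
    rintro ⟨h1, -⟩
    have h3 : crossTimes T N S' n < t := lt_of_le_of_lt (cross_mono hT0 hk) h1
    have e := cross_agree hT0 ht0 htT hag' n (Or.inl h3)
    rw [e, hhit] at h3
    linarith
  have hsub : Finset.Ico 1 (min n n') ⊆ Finset.Ico 1 n :=
    Finset.Ico_subset_Ico_right (min_le_left _ _)
  have hsub' : Finset.Ico 1 (min n n') ⊆ Finset.Ico 1 n' :=
    Finset.Ico_subset_Ico_right (min_le_right _ _)
  calc
    (∑ k ∈ Finset.Ico 1 n,
        if crossTimes T N S k < t ∧ t ≤ crossTimes T N S (k + 1) then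
          γh (FN T N S) (hatTau T N S k) else 0)
      = ∑ k ∈ Finset.Ico 1 (min n n'),
          if crossTimes T N S k < t ∧ t ≤ crossTimes T N S (k + 1) then
            γh (FN T N S) (hatTau T N S k) else 0 := by
        refine (Finset.sum_subset hsub ?_).symm
        intro k hk hk'
        rw [Finset.mem_Ico] at hk hk'
        exact hfzero k (by omega)
    _ = ∑ k ∈ Finset.Ico 1 (min n n'),
          if crossTimes T N S' k < t ∧ t ≤ crossTimes T N S' (k + 1) then
            γh (FN T N S') (hatTau T N S' k) else 0 := by
        apply Finset.sum_congr rfl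
        intro k hk
        rw [Finset.mem_Ico] at hk
        have hk1 : 1 ≤ k := hk.1
        have hkn : k < n := by omega
        have hkn' : k < n' := by omega
        by_cases hc : crossTimes T N S k < t ∧ t ≤ crossTimes T N S (k + 1)
        · have hc' := ind_imp hT0 ht0 htT hag hc
          rw [if_pos hc, if_pos hc']
          have crossEq : ∀ i ≤ k, crossTimes T N S i = crossTimes T N S' i :=
            fun i hi => cross_agree hT0 ht0 htT hag i
              (Or.inl (lt_of_le_of_lt (cross_mono hT0 hi) hc.1))
          have hτeq : hatTau T N S k = hatTau T N S' k :=
            hatTau_congr (by omega) (by omega) crossEq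
          have hb := hatTau_bounds hT0 hN hS (show k < hitIndex T N S from hkn)
          have hmem : hatTau T N S k ∈ Icc (0:ℝ) T :=
            ⟨hb.1, le_trans hb.2 (cross_bounds hT0 k).2⟩
          rw [← hτeq]
          exact hpred (FN T N S) (FN T N S') (hatTau T N S k) hmem
            (fun u _ hu => FN_agree hT0 hN hS hS' ht0 htT hag hk1 hkn hkn' hc.1 hu)
        · rw [if_neg hc, if_neg]
          intro hc'
          exact hc (ind_imp hT0 ht0 htT hag' hc')
    _ = ∑ k ∈ Finset.Ico 1 n',
          if crossTimes T N S' k < t ∧ t ≤ crossTimes T N S' (k + 1) then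
            γh (FN T N S') (hatTau T N S' k) else 0 := by
        refine Finset.sum_subset hsub' ?_
        intro k hk hk'
        rw [Finset.mem_Ico] at hk hk'
        exact hfzero' k (by omega)


end RobustHedging
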